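/- arXiv:2208.03501 — 5 statements merged into one kernel-verified Lean document; each statement's English description precedes it below -/
import Mathlib

section
/- Let A be a real symmetric positive definite n×n matrix and g a nonzero vector in ℝ^n that is not an eigenvector of A (i.e., g is not parallel to Ag). Then for every nonnegative integer j, (gᵀ A^j g)(gᵀ A^{j+2} g) > (gᵀ A^{j+1} g)². -/
/-!
Since `A ^ j` is positive definite, `⟨x, y⟩ := x ⬝ᵥ A ^ j *ᵥ y` is an inner product, and by the
symmetry of `A` the three quadratic forms are `⟨g, g⟩`, `⟨g, A g⟩` and `⟨A g, A g⟩`. The claim is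
strict Cauchy–Schwarz for the linearly independent pair `g`, `A g`.
-/

open Matrix

namespace Matrix

theorem IsSymm.dotProduct_mulVec_eq_mulVec_dotProduct {ι R : Type*} [Fintype ι] [CommSemiring R]
    {A : Matrix ι ι R} (hA : A.IsSymm) (x y : ι → R) :
    x ⬝ᵥ A *ᵥ y = A *ᵥ x ⬝ᵥ y := by
  rw [dotProduct_mulVec, ← mulVec_transpose, hA.eq]

protected theorem PosDef.pow {ι K : Type*} [Fintype ι] [DecidableEq ι] [Field K] [PartialOrder K]
    [StarRing K] [StarOrderedRing K] {M : Matrix ι ι K} (hM : M.PosDef) : ∀ k : ℕ, (M ^ k).PosDef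
  | 0 => by simpa using PosDef.one
  | 1 => by simpa using hM
  | k + 2 => by
    rw [pow_succ, pow_succ']
    simpa only [hM.isHermitian.eq] using
      (hM.pow k).conjTranspose_mul_mul_same (mulVec_injective_iff_isUnit.mpr hM.isUnit)

theorem PosDef.dotProduct_mulVec_sq_lt {ι R : Type*} [Fintype ι] [Field R] [LinearOrder R]
    [IsStrictOrderedRing R] [StarRing R] [TrivialStar R] {M : Matrix ι ι R} (hM : M.PosDef)
    {x y : ι → R} (hxy : LinearIndependent R ![x, y]) :
    (x ⬝ᵥ M *ᵥ y) ^ 2 < (x ⬝ᵥ M *ᵥ x) * (y ⬝ᵥ M *ᵥ y) := by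
  classical
  have hpos (v : ι → R) (hv : v ≠ 0) : 0 < M.toBilin' v v := by
    simpa [toBilin'_apply'] using hM.dotProduct_mulVec_pos hv
  have hsymm : LinearMap.IsSymm M.toBilin' := LinearMap.BilinForm.isSymm_iff.mp <|
    isSymm_toBilin'_iff_isSymm.mpr (isHermitian_iff_isSymm.mp hM.isHermitian)
  simpa only [toBilin'_apply'] using
    (M.toBilin'.apply_sq_lt_iff_linearIndependent_of_symm hpos hsymm x y).mpr hxy

end Matrix

theorem quadratic_form_power_cauchy_schwarz_strict
    {n : ℕ} (A : Matrix (Fin n) (Fin n) ℝ) (g : Fin n → ℝ)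
    (hA : A.PosDef) (hg : g ≠ 0)
    (hpar : ¬ ∃ c : ℝ, A.mulVec g = c • g) :
    ∀ j : ℕ,
      (g ⬝ᵥ (A ^ j).mulVec g) * (g ⬝ᵥ (A ^ (j + 2)).mulVec g) >
        (g ⬝ᵥ (A ^ (j + 1)).mulVec g) ^ 2 := by
  intro j
  have hsymm : A.IsSymm := isHermitian_iff_isSymm.mp hA.isHermitian
  have hindep : LinearIndependent ℝ ![g, A *ᵥ g] :=
    (LinearIndependent.pair_iff' hg).mpr fun c hc => hpar ⟨c, hc.symm⟩
  have hcross : g ⬝ᵥ (A ^ (j + 1)) *ᵥ g = g ⬝ᵥ (A ^ j) *ᵥ (A *ᵥ g) := by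
    rw [pow_succ, ← mulVec_mulVec]
  have hnormsq : g ⬝ᵥ (A ^ (j + 2)) *ᵥ g = A *ᵥ g ⬝ᵥ (A ^ j) *ᵥ (A *ᵥ g) := by
    rw [pow_succ, pow_succ', ← mulVec_mulVec, ← mulVec_mulVec,
      hsymm.dotProduct_mulVec_eq_mulVec_dotProduct]
  rw [hcross, hnormsq]
  exact (hA.pow j).dotProduct_mulVec_sq_lt hindep
end

section
/- With c_j = gᵀ A^j g (j = 0,...,4), φ₁ = c₁c₄ − c₂c₃, φ₂ = c₀c₄ − c₂², φ₃ = c₀c₃ − c₁c₂, where A is symmetric positive definite and g is nonzero and not parallel to Ag, the discriminant satisfies φ₂² − 4φ₁φ₃ > 0; consequently the quadratic equation φ₁α² − φ₂α + φ₃ = 0 has two distinct real positive roots. -/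
/-!
Every power `A ^ k` is positive definite, so `c k > 0`, and the strict Cauchy–Schwarz inequality
for the inner product `xᵀ A ^ k y` applied to the non-parallel vectors `g` and `A g` gives strict
log-convexity `c (k+1) ^ 2 < c k * c (k+2)`. This makes `φ₁, φ₂, φ₃` positive, and
`c₂² (φ₂² - 4 φ₁ φ₃) = (2 φ₁ c₁ - φ₂ c₂)² + 4 φ₁² (c₀ c₂ - c₁²) > 0`. A quadratic with positive
discriminant whose roots have positive sum `φ₂ / φ₁` and product `φ₃ / φ₁` has two distinct
positive roots.
-/

open Matrix

variable {ι : Type*} [Fintype ι]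

theorem Matrix.PosDef.pow_s2 [DecidableEq ι] {K : Type*} [Field K] [PartialOrder K] [StarRing K]
    [StarOrderedRing K] {M : Matrix ι ι K} (hM : M.PosDef) : ∀ k : ℕ, (M ^ k).PosDef
  | 0 => by simpa using PosDef.one
  | 1 => by simpa using hM
  | k + 2 => by
    have h := (hM.pow_s2 k).mul_mul_conjTranspose_same (vecMul_injective_iff_isUnit.mpr hM.isUnit)
    rwa [hM.isHermitian.eq, ← pow_succ', ← pow_succ] at h

theorem Matrix.IsHermitian.mulVec_dotProduct {R : Type*} [CommSemiring R] [StarRing R]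
    [TrivialStar R] {M : Matrix ι ι R} (hM : M.IsHermitian) (x y : ι → R) :
    (M *ᵥ x) ⬝ᵥ y = x ⬝ᵥ M *ᵥ y := by
  rw [dotProduct_mulVec, ← mulVec_transpose, ← conjTranspose_eq_transpose_of_trivial, hM.eq]

theorem Matrix.PosDef.dotProduct_mulVec_self_pos {M : Matrix ι ι ℝ} (hM : M.PosDef) {x : ι → ℝ}
    (hx : x ≠ 0) : 0 < x ⬝ᵥ M *ᵥ x := by
  simpa using hM.dotProduct_mulVec_pos hx

theorem Matrix.PosDef.sq_dotProduct_mulVec_lt {M : Matrix ι ι ℝ} (hM : M.PosDef) {x y : ι → ℝ}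
    (hx : x ≠ 0) (hxy : ¬ ∃ t : ℝ, y = t • x) :
    (x ⬝ᵥ M *ᵥ y) ^ 2 < (x ⬝ᵥ M *ᵥ x) * (y ⬝ᵥ M *ᵥ y) := by
  set a := x ⬝ᵥ M *ᵥ x
  set b := x ⬝ᵥ M *ᵥ y
  have ha : 0 < a := hM.dotProduct_mulVec_self_pos hx
  have hyx : y ⬝ᵥ M *ᵥ x = b := by rw [dotProduct_comm, hM.isHermitian.mulVec_dotProduct]
  have hw : a • y - b • x ≠ 0 := fun h ↦
    hxy ⟨b / a, by rw [div_eq_inv_mul, mul_smul, ← sub_eq_zero.mp h, inv_smul_smul₀ ha.ne']⟩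
  have hQ : (a • y - b • x) ⬝ᵥ M *ᵥ (a • y - b • x) = a * (a * (y ⬝ᵥ M *ᵥ y) - b ^ 2) := by
    simp only [mulVec_sub, mulVec_smul, dotProduct_sub, sub_dotProduct, dotProduct_smul,
      smul_dotProduct, smul_eq_mul, hyx]
    ring
  have hQpos := hM.dotProduct_mulVec_self_pos hw
  rw [hQ] at hQpos
  exact sub_pos.mp (pos_of_mul_pos_right hQpos ha.le)

section LogConvex

variable {c : ℕ → ℝ}

theorem mul_lt_mul_add_three_of_sq_lt_mul (hpos : ∀ k, 0 < c k)
    (hlc : ∀ k, c (k + 1) ^ 2 < c k * c (k + 2)) (k : ℕ) :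
    c (k + 1) * c (k + 2) < c k * c (k + 3) := by
  have h := mul_lt_mul'' (hlc k) (hlc (k + 1)) (sq_nonneg _) (sq_nonneg _)
  have hprod := mul_pos (hpos (k + 1)) (hpos (k + 2))
  nlinarith

theorem sq_lt_mul_add_four_of_sq_lt_mul (hpos : ∀ k, 0 < c k)
    (hlc : ∀ k, c (k + 1) ^ 2 < c k * c (k + 2)) (k : ℕ) :
    c (k + 2) ^ 2 < c k * c (k + 4) := by
  have h := mul_lt_mul'' (hlc k) (hlc (k + 2)) (sq_nonneg _) (sq_nonneg _)
  have h' := mul_lt_mul'' (hlc (k + 1)) (hlc (k + 1)) (sq_nonneg _) (sq_nonneg _)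
  have hsq := mul_pos (hpos (k + 2)) (hpos (k + 2))
  nlinarith

theorem hankel_discrim_pos (hpos : ∀ k, 0 < c k) (hlc : ∀ k, c (k + 1) ^ 2 < c k * c (k + 2)) :
    0 < (c 0 * c 4 - c 2 ^ 2) ^ 2 - 4 * (c 1 * c 4 - c 2 * c 3) * (c 0 * c 3 - c 1 * c 2) := by
  have hφ₁ : c 2 * c 3 < c 1 * c 4 := mul_lt_mul_add_three_of_sq_lt_mul hpos hlc 1
  have hminor : c 1 ^ 2 < c 0 * c 2 := hlc 0
  have key : ((c 0 * c 4 - c 2 ^ 2) ^ 2 - 4 * (c 1 * c 4 - c 2 * c 3) * (c 0 * c 3 - c 1 * c 2))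
      * c 2 ^ 2 = (2 * (c 1 * c 4 - c 2 * c 3) * c 1 - (c 0 * c 4 - c 2 ^ 2) * c 2) ^ 2
        + 4 * (c 1 * c 4 - c 2 * c 3) ^ 2 * (c 0 * c 2 - c 1 ^ 2) := by ring
  have hsum : 0 < _ * c 2 ^ 2 := key ▸ add_pos_of_nonneg_of_pos (sq_nonneg _)
    (by have := sub_pos.mpr hφ₁; have := sub_pos.mpr hminor; positivity)
  exact pos_of_mul_pos_left hsum (sq_nonneg _)

end LogConvex

theorem exists_two_pos_roots_of_discrim_pos {a b c : ℝ} (ha : 0 < a) (hb : 0 < b) (hc : 0 < c)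
    (hd : 0 < b ^ 2 - 4 * a * c) :
    ∃ x y : ℝ, x ≠ y ∧ 0 < x ∧ 0 < y ∧ a * x ^ 2 - b * x + c = 0 ∧ a * y ^ 2 - b * y + c = 0 := by
  set s := √(b ^ 2 - 4 * a * c)
  have hs2 : s ^ 2 = b ^ 2 - 4 * a * c := Real.sq_sqrt hd.le
  have hs : 0 < s := Real.sqrt_pos.mpr hd
  have hsb : s < b := by nlinarith [mul_pos ha hc]
  refine ⟨(b + s) / (2 * a), (b - s) / (2 * a), ?_, by positivity,
    div_pos (by linarith) (by positivity), ?_, ?_⟩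
  · rw [Ne, div_left_inj' (by positivity)]
    linarith
  all_goals field_simp; linear_combination hs2

theorem discriminant_positive_two_roots
    {n : ℕ} (A : Matrix (Fin n) (Fin n) ℝ) (g : Fin n → ℝ)
    (hA : A.PosDef) (hg : g ≠ 0)
    (hpar : ¬ ∃ t : ℝ, A.mulVec g = t • g)
    (c : ℕ → ℝ) (hc : ∀ j, c j = g ⬝ᵥ (A ^ j).mulVec g)
    (φ₁ φ₂ φ₃ : ℝ)
    (h1 : φ₁ = c 1 * c 4 - c 2 * c 3)
    (h2 : φ₂ = c 0 * c 4 - c 2 ^ 2)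
    (h3 : φ₃ = c 0 * c 3 - c 1 * c 2) :
    φ₂ ^ 2 - 4 * φ₁ * φ₃ > 0 ∧
    ∃ x y : ℝ, x ≠ y ∧ 0 < x ∧ 0 < y ∧
      φ₁ * x ^ 2 - φ₂ * x + φ₃ = 0 ∧
      φ₁ * y ^ 2 - φ₂ * y + φ₃ = 0 := by
  have hpos : ∀ k, 0 < c k := fun k ↦ hc k ▸ (hA.pow_s2 k).dotProduct_mulVec_self_pos hg
  have hlc : ∀ k, c (k + 1) ^ 2 < c k * c (k + 2) := by
    intro k
    have hcs := (hA.pow_s2 k).sq_dotProduct_mulVec_lt hg hpar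
    rwa [hA.isHermitian.mulVec_dotProduct, mulVec_mulVec, mulVec_mulVec, ← pow_succ,
      ← pow_succ', ← hc, ← hc, ← hc] at hcs
  have hD := hankel_discrim_pos hpos hlc
  subst h1 h2 h3
  refine ⟨hD, exists_two_pos_roots_of_discrim_pos ?_ ?_ ?_ hD⟩
  · exact sub_pos.mpr (mul_lt_mul_add_three_of_sq_lt_mul hpos hlc 1)
  · exact sub_pos.mpr (sq_lt_mul_add_four_of_sq_lt_mul hpos hlc 0)
  · exact sub_pos.mpr (mul_lt_mul_add_three_of_sq_lt_mul hpos hlc 0)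
end

section
/- Boundedness of the new stepsize: under the assumptions of the previous statement, the smaller root α̃ of φ₁α² − φ₂α + φ₃ = 0 satisfies 1/λ_n ≤ α̃ ≤ 1/λ₁, where λ₁ and λ_n are the smallest and largest eigenvalues of A. -/
/-!
Diagonalising `A`, the numbers `c j` become the moments `∑ i, w i * μ i ^ j` of the discrete measure
with weights `w i = ⟨vᵢ, g⟩²` at the eigenvalues `μ i ∈ [λ₁, λₙ]`; as `g` is not an eigenvector,
this measure charges two distinct points. A Lagrange-type identity for double sums gives
`c (k+1) * c (k+2) ≤ c k * c (k+3)` (strict for such a measure) and `c (k+1)² ≤ c k * c (k+2)`,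
hence `φ₁ > 0` and `φ₃ ≥ 0`. For `q α = φ₁ α² - φ₂ α + φ₃` one finds
`c₃² q (c₂/c₃) = φ₃ (c₃² - c₂c₄) ≤ 0`, so the minimal-gradient step `c₂/c₃` lies between the roots,
while `λₙ² q (1/λₙ) ≥ 0` is the same moment inequality for the weights `w i * (λₙ - μ i)`.
Together with `1/λₙ < c₂/c₃ ≤ 1/λ₁` this traps the smaller root in `[1/λₙ, 1/λ₁]`.
-/

section Quadratic

variable {a b c x y : ℝ}

theorem abs_two_mul_sub_le_sqrt_discrim (ha : 0 < a) (hx : a * x ^ 2 - b * x + c ≤ 0) :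
    |2 * a * x - b| ≤ √(discrim a b c) :=
  Real.abs_le_sqrt (by rw [discrim]; nlinarith [mul_le_mul_of_nonneg_left hx ha.le])

theorem smaller_root_le_of_quadratic_nonpos (ha : 0 < a) (hx : a * x ^ 2 - b * x + c ≤ 0) :
    (b - √(discrim a b c)) / (2 * a) ≤ x := by
  rw [div_le_iff₀ (by positivity)]
  linarith [(abs_le.1 (abs_two_mul_sub_le_sqrt_discrim ha hx)).1]

theorem le_smaller_root_of_quadratic_nonneg (ha : 0 < a) (hx : a * x ^ 2 - b * x + c ≤ 0)
    (hy : 0 ≤ a * y ^ 2 - b * y + c) (hyx : y < x) :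
    y ≤ (b - √(discrim a b c)) / (2 * a) := by
  have hys : √(discrim a b c) ≤ |2 * a * y - b| := by
    rw [← Real.sqrt_sq_eq_abs]
    exact Real.sqrt_le_sqrt (by rw [discrim]; nlinarith [mul_nonneg ha.le hy])
  have hxs := (abs_le.1 (abs_two_mul_sub_le_sqrt_discrim ha hx)).2
  have hyx' : 2 * a * y < 2 * a * x := mul_lt_mul_of_pos_left hyx (by positivity)
  have hneg : 2 * a * y - b ≤ -√(discrim a b c) := by
    rcases le_abs'.1 hys with h | h
    · exact h
    · linarith
  rw [le_div_iff₀ (by positivity)]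
  linarith

end Quadratic

section Moments

variable {ι : Type*} [Fintype ι]

theorem two_mul_sum_mul_sum_sub_sum_mul_sum (W a b p q : ι → ℝ) :
    2 * ((∑ i, W i * a i) * (∑ i, W i * b i) - (∑ i, W i * p i) * (∑ i, W i * q i)) =
      ∑ i, ∑ j, W i * W j * (a i * b j + a j * b i - (p i * q j + p j * q i)) := by
  have hexpand : ∀ i j, W i * W j * (a i * b j + a j * b i - (p i * q j + p j * q i)) =
      W i * a i * (W j * b j) + W i * b i * (W j * a j) -
        (W i * p i * (W j * q j) + W i * q i * (W j * p j)) := fun i j => by ring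
  simp only [hexpand, Finset.sum_add_distrib, Finset.sum_sub_distrib, ← Finset.mul_sum,
    ← Finset.sum_mul]
  ring

theorem sum_mul_sum_le_sum_mul_sum {W a b p q : ι → ℝ} (hW : ∀ i, 0 ≤ W i)
    (h : ∀ i j, p i * q j + p j * q i ≤ a i * b j + a j * b i) :
    (∑ i, W i * p i) * (∑ i, W i * q i) ≤ (∑ i, W i * a i) * (∑ i, W i * b i) := by
  have hsum : 0 ≤ ∑ i, ∑ j, W i * W j * (a i * b j + a j * b i - (p i * q j + p j * q i)) :=
    Finset.sum_nonneg fun i _ => Finset.sum_nonneg fun j _ =>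
      mul_nonneg (mul_nonneg (hW i) (hW j)) (sub_nonneg.2 (h i j))
  linarith [two_mul_sum_mul_sum_sub_sum_mul_sum W a b p q]

theorem sum_mul_sum_lt_sum_mul_sum {W a b p q : ι → ℝ} (hW : ∀ i, 0 ≤ W i)
    (h : ∀ i j, p i * q j + p j * q i ≤ a i * b j + a j * b i) {i j : ι} (hi : 0 < W i)
    (hj : 0 < W j) (hij : p i * q j + p j * q i < a i * b j + a j * b i) :
    (∑ i, W i * p i) * (∑ i, W i * q i) < (∑ i, W i * a i) * (∑ i, W i * b i) := by
  have hsum : 0 < ∑ i, ∑ j, W i * W j * (a i * b j + a j * b i - (p i * q j + p j * q i)) := by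
    refine Finset.sum_pos' (fun k _ => Finset.sum_nonneg fun l _ =>
      mul_nonneg (mul_nonneg (hW k) (hW l)) (sub_nonneg.2 (h k l))) ⟨i, Finset.mem_univ _, ?_⟩
    refine Finset.sum_pos' (fun l _ =>
      mul_nonneg (mul_nonneg (hW i) (hW l)) (sub_nonneg.2 (h i l))) ⟨j, Finset.mem_univ _, ?_⟩
    exact mul_pos (mul_pos hi hj) (sub_pos.2 hij)
  linarith [two_mul_sum_mul_sum_sub_sum_mul_sum W a b p q]

variable {w μ : ι → ℝ} {c : ℕ → ℝ}

theorem moment_pos (hw : ∀ i, 0 ≤ w i) (hμ : ∀ i, 0 < μ i) (hsupp : ∃ i, 0 < w i)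
    (hc : ∀ j, c j = ∑ i, w i * μ i ^ j) (j : ℕ) : 0 < c j := by
  obtain ⟨i, hi⟩ := hsupp
  rw [hc]
  exact Finset.sum_pos' (fun k _ => mul_nonneg (hw k) (pow_nonneg (hμ k).le j))
    ⟨i, Finset.mem_univ _, mul_pos hi (pow_pos (hμ i) j)⟩

theorem sum_mul_sub_mul_pow_eq (hc : ∀ j, c j = ∑ i, w i * μ i ^ j) (t : ℝ) (j : ℕ) :
    ∑ i, w i * (t - μ i) * μ i ^ j = t * c j - c (j + 1) := by
  simp only [hc, Finset.mul_sum, ← Finset.sum_sub_distrib]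
  exact Finset.sum_congr rfl fun i _ => by ring

theorem sq_moment_le (hw : ∀ i, 0 ≤ w i) (hμ : ∀ i, 0 ≤ μ i)
    (hc : ∀ j, c j = ∑ i, w i * μ i ^ j) (k : ℕ) : c (k + 1) ^ 2 ≤ c k * c (k + 2) := by
  simp only [sq, hc]
  refine sum_mul_sum_le_sum_mul_sum hw fun i j => ?_
  have hgap : 0 ≤ (μ i * μ j) ^ k * (μ i - μ j) ^ 2 :=
    mul_nonneg (pow_nonneg (mul_nonneg (hμ i) (hμ j)) k) (sq_nonneg _)
  linear_combination hgap

theorem pow_mul_pow_add_le {x y : ℝ} (hx : 0 ≤ x) (hy : 0 ≤ y) (k : ℕ) :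
    x ^ (k + 1) * y ^ (k + 2) + y ^ (k + 1) * x ^ (k + 2) ≤
      x ^ k * y ^ (k + 3) + y ^ k * x ^ (k + 3) := by
  have hgap : 0 ≤ (x * y) ^ k * (x + y) * (x - y) ^ 2 := by positivity
  linear_combination hgap

theorem pow_mul_pow_add_lt {x y : ℝ} (hx : 0 < x) (hy : 0 < y) (hxy : x ≠ y) (k : ℕ) :
    x ^ (k + 1) * y ^ (k + 2) + y ^ (k + 1) * x ^ (k + 2) <
      x ^ k * y ^ (k + 3) + y ^ k * x ^ (k + 3) := by
  have hgap : 0 < (x * y) ^ k * (x + y) * (x - y) ^ 2 := by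
    have := sub_ne_zero.2 hxy
    positivity
  linear_combination hgap

theorem moment_mul_moment_le (hw : ∀ i, 0 ≤ w i) (hμ : ∀ i, 0 ≤ μ i)
    (hc : ∀ j, c j = ∑ i, w i * μ i ^ j) (k : ℕ) : c (k + 1) * c (k + 2) ≤ c k * c (k + 3) := by
  simp only [hc]
  exact sum_mul_sum_le_sum_mul_sum hw fun i j => pow_mul_pow_add_le (hμ i) (hμ j) k

theorem moment_mul_moment_lt (hw : ∀ i, 0 ≤ w i) (hμ : ∀ i, 0 < μ i)
    (hsupp : ∃ i j, 0 < w i ∧ 0 < w j ∧ μ i ≠ μ j) (hc : ∀ j, c j = ∑ i, w i * μ i ^ j)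
    (k : ℕ) : c (k + 1) * c (k + 2) < c k * c (k + 3) := by
  obtain ⟨i, j, hi, hj, hij⟩ := hsupp
  simp only [hc]
  exact sum_mul_sum_lt_sum_mul_sum hw (fun i j => pow_mul_pow_add_le (hμ i).le (hμ j).le k)
    hi hj (pow_mul_pow_add_lt (hμ i) (hμ j) hij k)

theorem quadratic_nonpos_at_moment_ratio {φ₁ φ₂ φ₃ : ℝ} (hw : ∀ i, 0 ≤ w i)
    (hμ : ∀ i, 0 ≤ μ i) (hc : ∀ j, c j = ∑ i, w i * μ i ^ j) (hc3 : c 3 ≠ 0)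
    (h1 : φ₁ = c 1 * c 4 - c 2 * c 3) (h2 : φ₂ = c 0 * c 4 - c 2 ^ 2)
    (h3 : φ₃ = c 0 * c 3 - c 1 * c 2) :
    φ₁ * (c 2 / c 3) ^ 2 - φ₂ * (c 2 / c 3) + φ₃ ≤ 0 := by
  have hid : φ₁ * (c 2 / c 3) ^ 2 - φ₂ * (c 2 / c 3) + φ₃ =
      φ₃ * (c 3 ^ 2 - c 2 * c 4) / c 3 ^ 2 := by
    field_simp
    rw [h1, h2, h3]
    ring
  have hφ₃ : 0 ≤ φ₃ := by linarith [moment_mul_moment_le hw hμ hc 0]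
  rw [hid]
  exact div_nonpos_of_nonpos_of_nonneg
    (mul_nonpos_of_nonneg_of_nonpos hφ₃ (by linarith [sq_moment_le hw hμ hc 2])) (sq_nonneg _)

theorem quadratic_nonneg_at_inv_of_le {φ₁ φ₂ φ₃ t : ℝ} (hw : ∀ i, 0 ≤ w i)
    (hμ : ∀ i, 0 ≤ μ i ∧ μ i ≤ t) (ht : 0 < t) (hc : ∀ j, c j = ∑ i, w i * μ i ^ j)
    (h1 : φ₁ = c 1 * c 4 - c 2 * c 3) (h2 : φ₂ = c 0 * c 4 - c 2 ^ 2)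
    (h3 : φ₃ = c 0 * c 3 - c 1 * c 2) :
    0 ≤ φ₁ * (1 / t) ^ 2 - φ₂ * (1 / t) + φ₃ := by
  have hid : φ₁ * (1 / t) ^ 2 - φ₂ * (1 / t) + φ₃ =
      ((t * c 0 - c 1) * (t * c 3 - c 4) - (t * c 1 - c 2) * (t * c 2 - c 3)) / t ^ 2 := by
    field_simp
    rw [h1, h2, h3]
    ring
  -- `t * c j - c (j + 1)` are the moments of the nonnegative weights `w * (t - μ)`
  have he := fun j => (sum_mul_sub_mul_pow_eq hc t j).symm
  have hW : ∀ i, 0 ≤ w i * (t - μ i) := fun i => mul_nonneg (hw i) (sub_nonneg.2 (hμ i).2)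
  rw [hid]
  exact div_nonneg (sub_nonneg.2 (moment_mul_moment_le hW (fun i => (hμ i).1) he 0))
    (sq_nonneg _)

theorem smaller_root_mem_Icc_of_moments {lam1 lamn φ₁ φ₂ φ₃ : ℝ} (hw : ∀ i, 0 ≤ w i)
    (hlam1 : 0 < lam1) (hμ : ∀ i, μ i ∈ Set.Icc lam1 lamn)
    (hsupp : ∃ i j, 0 < w i ∧ 0 < w j ∧ μ i ≠ μ j) (hc : ∀ j, c j = ∑ i, w i * μ i ^ j)
    (h1 : φ₁ = c 1 * c 4 - c 2 * c 3) (h2 : φ₂ = c 0 * c 4 - c 2 ^ 2)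
    (h3 : φ₃ = c 0 * c 3 - c 1 * c 2) :
    (φ₂ - √(discrim φ₁ φ₂ φ₃)) / (2 * φ₁) ∈ Set.Icc (1 / lamn) (1 / lam1) := by
  obtain ⟨i, j, hwi, hwj, hμij⟩ := hsupp
  have hμpos : ∀ i, 0 < μ i := fun i => hlam1.trans_le (hμ i).1
  have hc_pos : ∀ j, 0 < c j := moment_pos hw hμpos ⟨i, hwi⟩ hc
  have hlamn : 0 < lamn := (hμpos i).trans_le (hμ i).2
  have hφ₁ : 0 < φ₁ := by
    linarith [moment_mul_moment_lt hw hμpos ⟨i, j, hwi, hwj, hμij⟩ hc 1]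
  have hratio := quadratic_nonpos_at_moment_ratio hw (fun i => (hμpos i).le) hc (hc_pos 3).ne'
    h1 h2 h3
  have hinv_lamn := quadratic_nonneg_at_inv_of_le hw (fun i => ⟨(hμpos i).le, (hμ i).2⟩) hlamn
    hc h1 h2 h3
  have hlamn_lt : 1 / lamn < c 2 / c 3 := by
    obtain ⟨k, hwk, hk⟩ : ∃ k, 0 < w k ∧ μ k < lamn := by
      rcases lt_or_gt_of_ne hμij with h | h
      · exact ⟨i, hwi, h.trans_le (hμ j).2⟩
      · exact ⟨j, hwj, h.trans_le (hμ i).2⟩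
    have := moment_pos (fun i => mul_nonneg (hw i) (sub_nonneg.2 (hμ i).2)) hμpos
      ⟨k, mul_pos hwk (sub_pos.2 hk)⟩ (fun j => (sum_mul_sub_mul_pow_eq hc lamn j).symm) 2
    rw [div_lt_div_iff₀ hlamn (hc_pos 3)]
    linarith
  have hratio_le : c 2 / c 3 ≤ 1 / lam1 := by
    have hsum : ∑ i, w i * (lam1 - μ i) * μ i ^ 2 ≤ 0 := Finset.sum_nonpos fun i _ =>
      mul_nonpos_of_nonpos_of_nonneg (mul_nonpos_of_nonneg_of_nonpos (hw i)
        (sub_nonpos.2 (hμ i).1)) (sq_nonneg _)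
    rw [sum_mul_sub_mul_pow_eq hc lam1 2] at hsum
    rw [div_le_div_iff₀ (hc_pos 3) hlam1]
    linarith
  exact ⟨le_smaller_root_of_quadratic_nonneg hφ₁ hratio hinv_lamn hlamn_lt,
    (smaller_root_le_of_quadratic_nonpos hφ₁ hratio).trans hratio_le⟩

end Moments

namespace Matrix.IsHermitian

variable {ι : Type*} [Fintype ι] [DecidableEq ι] {A : Matrix ι ι ℝ} (hA : A.IsHermitian)

theorem pow_mulVec_eigenvectorBasis (i : ι) (j : ℕ) :
    A ^ j *ᵥ ⇑(hA.eigenvectorBasis i) = hA.eigenvalues i ^ j • ⇑(hA.eigenvectorBasis i) := by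
  induction j with
  | zero => simp
  | succ j ih =>
    rw [pow_succ', ← mulVec_mulVec, ih, mulVec_smul, mulVec_eigenvectorBasis, smul_smul, pow_succ]

theorem sum_dotProduct_smul_eigenvectorBasis (g : ι → ℝ) :
    ∑ i, (⇑(hA.eigenvectorBasis i) ⬝ᵥ g) • ⇑(hA.eigenvectorBasis i) = g := by
  have h := congrArg WithLp.ofLp ((hA.eigenvectorBasis).sum_repr' (WithLp.toLp 2 g))
  simpa [EuclideanSpace.inner_eq_star_dotProduct, dotProduct_comm] using h

theorem pow_mulVec_eq_sum (g : ι → ℝ) (j : ℕ) :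
    A ^ j *ᵥ g = ∑ i, ((⇑(hA.eigenvectorBasis i) ⬝ᵥ g) * hA.eigenvalues i ^ j) •
      ⇑(hA.eigenvectorBasis i) := by
  conv_lhs => rw [← hA.sum_dotProduct_smul_eigenvectorBasis g]
  simp only [mulVec_sum, mulVec_smul, pow_mulVec_eigenvectorBasis, smul_smul]

theorem dotProduct_pow_mulVec_eq_sum (g : ι → ℝ) (j : ℕ) :
    g ⬝ᵥ A ^ j *ᵥ g = ∑ i, (⇑(hA.eigenvectorBasis i) ⬝ᵥ g) ^ 2 * hA.eigenvalues i ^ j := by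
  rw [hA.pow_mulVec_eq_sum g j, dotProduct_sum]
  refine Finset.sum_congr rfl fun i _ => ?_
  rw [dotProduct_smul, smul_eq_mul, dotProduct_comm g]
  ring

theorem dotProduct_eigenvectorBasis_self (i : ι) :
    ⇑(hA.eigenvectorBasis i) ⬝ᵥ ⇑(hA.eigenvectorBasis i) = 1 := by
  have h := (hA.eigenvectorBasis).inner_eq_one i
  rwa [EuclideanSpace.inner_eq_star_dotProduct, star_trivial] at h

theorem eigenvalues_mem_Icc {lam1 lamn : ℝ}
    (hbound : ∀ v : ι → ℝ, lam1 * (v ⬝ᵥ v) ≤ v ⬝ᵥ A *ᵥ v ∧ v ⬝ᵥ A *ᵥ v ≤ lamn * (v ⬝ᵥ v))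
    (i : ι) : hA.eigenvalues i ∈ Set.Icc lam1 lamn := by
  have hrayleigh : ⇑(hA.eigenvectorBasis i) ⬝ᵥ A *ᵥ ⇑(hA.eigenvectorBasis i) =
      hA.eigenvalues i := by
    rw [mulVec_eigenvectorBasis, dotProduct_smul, smul_eq_mul, dotProduct_eigenvectorBasis_self,
      mul_one]
  simpa only [hrayleigh, dotProduct_eigenvectorBasis_self, mul_one, Set.mem_Icc] using
    hbound (hA.eigenvectorBasis i)

theorem exists_eigenvalues_ne_of_not_exists_mulVec_eq_smul {g : ι → ℝ}
    (hg : ¬ ∃ t : ℝ, A *ᵥ g = t • g) :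
    ∃ i j, 0 < (⇑(hA.eigenvectorBasis i) ⬝ᵥ g) ^ 2 ∧ 0 < (⇑(hA.eigenvectorBasis j) ⬝ᵥ g) ^ 2 ∧
      hA.eigenvalues i ≠ hA.eigenvalues j := by
  by_contra! hconst
  obtain ⟨i, hi⟩ : ∃ i, ⇑(hA.eigenvectorBasis i) ⬝ᵥ g ≠ 0 := by
    by_contra! hzero
    refine hg ⟨0, ?_⟩
    rw [← hA.sum_dotProduct_smul_eigenvectorBasis g]
    simp [hzero]
  refine hg ⟨hA.eigenvalues i, ?_⟩
  have hAg := hA.pow_mulVec_eq_sum g 1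
  rw [pow_one] at hAg
  conv_rhs => rw [← hA.sum_dotProduct_smul_eigenvectorBasis g]
  rw [hAg, Finset.smul_sum]
  refine Finset.sum_congr rfl fun j _ => ?_
  rcases eq_or_ne (⇑(hA.eigenvectorBasis j) ⬝ᵥ g) 0 with hj | hj
  · simp [hj]
  · rw [hconst j i (by positivity) (by positivity), pow_one, smul_smul, mul_comm]

end Matrix.IsHermitian

theorem tilde_alpha_bounds_general
    {n : ℕ} (A : Matrix (Fin n) (Fin n) ℝ) (g : Fin n → ℝ)
    (hA : A.PosDef)
    (hpar : ¬ ∃ t : ℝ, A.mulVec g = t • g)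
    (lam1 lamn : ℝ) (hlam1 : 0 < lam1)
    (hbound : ∀ v : Fin n → ℝ,
      lam1 * (v ⬝ᵥ v) ≤ v ⬝ᵥ A.mulVec v ∧ v ⬝ᵥ A.mulVec v ≤ lamn * (v ⬝ᵥ v))
    (c : ℕ → ℝ) (hc : ∀ j, c j = g ⬝ᵥ (A ^ j).mulVec g)
    (φ₁ φ₂ φ₃ : ℝ)
    (h1 : φ₁ = c 1 * c 4 - c 2 * c 3)
    (h2 : φ₂ = c 0 * c 4 - c 2 ^ 2)
    (h3 : φ₃ = c 0 * c 3 - c 1 * c 2) :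
    1 / lamn ≤ (φ₂ - Real.sqrt (φ₂ ^ 2 - 4 * φ₁ * φ₃)) / (2 * φ₁) ∧
    (φ₂ - Real.sqrt (φ₂ ^ 2 - 4 * φ₁ * φ₃)) / (2 * φ₁) ≤ 1 / lam1 := by
  have hAh := hA.isHermitian
  exact smaller_root_mem_Icc_of_moments (fun i => sq_nonneg _) hlam1
    (hAh.eigenvalues_mem_Icc hbound) (hAh.exists_eigenvalues_ne_of_not_exists_mulVec_eq_smul hpar)
    (fun j => (hc j).trans (hAh.dotProduct_pow_mulVec_eq_sum g j)) h1 h2 h3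

theorem tilde_alpha_bounds
    {n : ℕ} (A : Matrix (Fin n) (Fin n) ℝ) (g : Fin n → ℝ)
    (hA : A.PosDef) (hg : g ≠ 0)
    (hpar : ¬ ∃ t : ℝ, A.mulVec g = t • g)
    (lam1 lamn : ℝ) (hlam1 : 0 < lam1)
    (hbound : ∀ v : Fin n → ℝ,
      lam1 * (v ⬝ᵥ v) ≤ v ⬝ᵥ A.mulVec v ∧ v ⬝ᵥ A.mulVec v ≤ lamn * (v ⬝ᵥ v))
    (c : ℕ → ℝ) (hc : ∀ j, c j = g ⬝ᵥ (A ^ j).mulVec g)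
    (φ₁ φ₂ φ₃ : ℝ)
    (h1 : φ₁ = c 1 * c 4 - c 2 * c 3)
    (h2 : φ₂ = c 0 * c 4 - c 2 ^ 2)
    (h3 : φ₃ = c 0 * c 3 - c 1 * c 2) :
    1 / lamn ≤ (φ₂ - Real.sqrt (φ₂ ^ 2 - 4 * φ₁ * φ₃)) / (2 * φ₁) ∧
    (φ₂ - Real.sqrt (φ₂ ^ 2 - 4 * φ₁ * φ₃)) / (2 * φ₁) ≤ 1 / lam1 :=
  tilde_alpha_bounds_general A g hA hpar lam1 lamn hlam1 hbound c hc φ₁ φ₂ φ₃ h1 h2 h3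
end

section
/- Let f₁(α) = (gᵀ(I−αA)²g)/(gᵀ(I−αA)A(I−αA)g) for a symmetric positive definite A and g ≠ 0 not parallel to Ag. The two critical points β̃ ≤ β̂ of f₁ are the roots of φ₄β² − φ₃β + φ₅ = 0 where φ₃ = c₀c₃ − c₁c₂, φ₄ = c₁c₃ − c₂², φ₅ = c₀c₂ − c₁², and they satisfy the fixed-point-like identity β̂ = f₁(β̃). -/
/-!
Expanding `(1 - βA) Aᵏ (1 - βA)` writes `f₁(β) = N(β) / D(β)` with
`N(β) = c₀ - 2βc₁ + β²c₂` and `D(β) = c₁ - 2βc₂ + β²c₃`. Strict Cauchy–Schwarz for `g` and `Ag` in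
the `A`-inner product gives `φ₄ > 0`, so the quadratic is genuine, and together with
`c₁²(φ₃² - 4φ₄φ₅) = (2φ₄c₀ - φ₃c₁)² + 4φ₄φ₅²` its discriminant is nonnegative.
Then `β̂ · D(β̃) = N(β̃)` is a linear combination of Vieta's relation `φ₄(β̃ + β̂) = φ₃` and the
root equation of `β̃`, and `D(β̃) = ⟪(1 - β̃A)g, A(1 - β̃A)g⟫ > 0` since `g` and `Ag` are
independent.
-/

open Matrix

theorem one_sub_smul_mul_pow_mul_one_sub_smul {R S : Type*} [CommRing R] [Ring S] [Algebra R S]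
    (a : S) (β : R) (k : ℕ) :
    (1 - β • a) * a ^ k * (1 - β • a) = a ^ k - (2 * β) • a ^ (k + 1) + β ^ 2 • a ^ (k + 2) := by
  simp only [mul_sub, sub_mul, mul_one, one_mul, smul_mul_assoc, mul_smul_comm, ← pow_succ',
    pow_succ]
  module

theorem quadratic_root_eq_zero {a b c s : ℝ} (ha : a ≠ 0) (hs : s ^ 2 = b ^ 2 - 4 * a * c) :
    a * ((b + s) / (2 * a)) ^ 2 - b * ((b + s) / (2 * a)) + c = 0 := by
  field_simp
  linear_combination hs

theorem hankel_discrim_nonneg {c₀ c₁ c₂ c₃ : ℝ} (hc₁ : c₁ ≠ 0) (hφ₄ : 0 ≤ c₁ * c₃ - c₂ ^ 2) :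
    0 ≤ (c₀ * c₃ - c₁ * c₂) ^ 2 - 4 * (c₁ * c₃ - c₂ ^ 2) * (c₀ * c₂ - c₁ ^ 2) := by
  have key : c₁ ^ 2 * ((c₀ * c₃ - c₁ * c₂) ^ 2 - 4 * (c₁ * c₃ - c₂ ^ 2) * (c₀ * c₂ - c₁ ^ 2)) =
      (2 * (c₁ * c₃ - c₂ ^ 2) * c₀ - (c₀ * c₃ - c₁ * c₂) * c₁) ^ 2 +
        4 * (c₁ * c₃ - c₂ ^ 2) * (c₀ * c₂ - c₁ ^ 2) ^ 2 := by
    ring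
  have hprod : 0 ≤ c₁ ^ 2 *
      ((c₀ * c₃ - c₁ * c₂) ^ 2 - 4 * (c₁ * c₃ - c₂ ^ 2) * (c₀ * c₂ - c₁ ^ 2)) := by
    rw [key]
    positivity
  exact nonneg_of_mul_nonneg_right hprod (by positivity)

theorem vieta_partner_mul_denominator_eq_numerator {c₀ c₁ c₂ c₃ β β' : ℝ}
    (hφ₄ : c₁ * c₃ - c₂ ^ 2 ≠ 0)
    (hsum : (c₁ * c₃ - c₂ ^ 2) * (β + β') = c₀ * c₃ - c₁ * c₂)
    (hroot : (c₁ * c₃ - c₂ ^ 2) * β ^ 2 - (c₀ * c₃ - c₁ * c₂) * β + (c₀ * c₂ - c₁ ^ 2) = 0) :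
    β' * (c₁ - 2 * β * c₂ + β ^ 2 * c₃) = c₀ - 2 * β * c₁ + β ^ 2 * c₂ := by
  apply mul_left_cancel₀ hφ₄
  linear_combination (c₁ - 2 * β * c₂ + β ^ 2 * c₃) * hsum + (c₂ - β * c₃) * hroot

namespace Matrix

variable {ι : Type*} [Fintype ι]

theorem linearIndependent_pair_mulVec {K : Type*} [Field K] {A : Matrix ι ι K} {x : ι → K}
    (h : ¬ ∃ t : K, A *ᵥ x = t • x) : LinearIndependent K ![x, A *ᵥ x] := by
  have hx : x ≠ 0 := by
    rintro rfl
    exact h ⟨0, by simp⟩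
  exact (LinearIndependent.pair_iff' hx).mpr fun t ht => h ⟨t, ht.symm⟩

theorem one_sub_smul_mulVec_ne_zero {K : Type*} [Field K] [DecidableEq ι] {A : Matrix ι ι K}
    {x : ι → K} (h : LinearIndependent K ![x, A *ᵥ x]) (β : K) : (1 - β • A) *ᵥ x ≠ 0 := by
  refine fun hβ => one_ne_zero (LinearIndependent.pair_iff.mp h 1 (-β) ?_).1
  rw [← hβ, sub_mulVec, one_mulVec, smul_mulVec, one_smul, neg_smul, sub_eq_add_neg]

theorem dotProduct_one_sub_smul_mul_pow_mul_one_sub_smul {R : Type*} [CommRing R] [DecidableEq ι]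
    {A : Matrix ι ι R} {x : ι → R} {c : ℕ → R} (hc : ∀ j, c j = x ⬝ᵥ A ^ j *ᵥ x) (β : R) (k : ℕ) :
    x ⬝ᵥ ((1 - β • A) * A ^ k * (1 - β • A)) *ᵥ x =
      c k - 2 * β * c (k + 1) + β ^ 2 * c (k + 2) := by
  rw [one_sub_smul_mul_pow_mul_one_sub_smul]
  simp only [add_mulVec, sub_mulVec, smul_mulVec, dotProduct_add, dotProduct_sub,
    dotProduct_smul, smul_eq_mul, hc]

theorem IsSymm.mulVec_dotProduct {R : Type*} [CommSemiring R] {A : Matrix ι ι R}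
    (hA : A.IsSymm) (x y : ι → R) : A *ᵥ x ⬝ᵥ y = x ⬝ᵥ A *ᵥ y := by
  rw [← hA.eq, mulVec_transpose, hA.eq, dotProduct_mulVec]

theorem PosDef.dotProduct_mul_mul_pos {M B : Matrix ι ι ℝ} (hM : M.PosDef) (hB : B.IsSymm)
    {x : ι → ℝ} (hBx : B *ᵥ x ≠ 0) : 0 < x ⬝ᵥ (B * M * B) *ᵥ x := by
  rw [← mulVec_mulVec, ← mulVec_mulVec, ← hB.mulVec_dotProduct]
  simpa using hM.dotProduct_mulVec_pos hBx

theorem PosDef.sq_dotProduct_mulVec_lt_s11 {M : Matrix ι ι ℝ} (hM : M.PosDef) {x y : ι → ℝ}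
    (hxy : LinearIndependent ℝ ![x, y]) :
    (x ⬝ᵥ M *ᵥ y) ^ 2 < (x ⬝ᵥ M *ᵥ x) * (y ⬝ᵥ M *ᵥ y) := by
  have hsymm : M.IsSymm := isHermitian_iff_isSymm.mp hM.1
  have hx : 0 < x ⬝ᵥ M *ᵥ x := by simpa using hM.dotProduct_mulVec_pos (hxy.ne_zero 0)
  set v := (x ⬝ᵥ M *ᵥ y) • x + (-(x ⬝ᵥ M *ᵥ x)) • y
  have hv : v ≠ 0 := fun hv =>
    hx.ne' (neg_eq_zero.mp (LinearIndependent.pair_iff.mp hxy _ _ hv).2)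
  have hyx : y ⬝ᵥ M *ᵥ x = x ⬝ᵥ M *ᵥ y := by rw [← hsymm.mulVec_dotProduct, dotProduct_comm]
  have hvv : v ⬝ᵥ M *ᵥ v =
      (x ⬝ᵥ M *ᵥ x) * ((x ⬝ᵥ M *ᵥ x) * (y ⬝ᵥ M *ᵥ y) - (x ⬝ᵥ M *ᵥ y) ^ 2) := by
    simp only [v, mulVec_add, mulVec_smul, add_dotProduct, dotProduct_add, smul_dotProduct,
      dotProduct_smul, smul_eq_mul, hyx]
    ring
  have hvpos : 0 < v ⬝ᵥ M *ᵥ v := by simpa using hM.dotProduct_mulVec_pos hv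
  rw [hvv] at hvpos
  linarith [pos_of_mul_pos_right hvpos hx.le]

theorem PosDef.sq_dotProduct_pow_two_mulVec_lt {A : Matrix ι ι ℝ} [DecidableEq ι] (hA : A.PosDef)
    {x : ι → ℝ} (hx : ¬ ∃ t : ℝ, A *ᵥ x = t • x) :
    (x ⬝ᵥ A ^ 2 *ᵥ x) ^ 2 < (x ⬝ᵥ A ^ 1 *ᵥ x) * (x ⬝ᵥ A ^ 3 *ᵥ x) := by
  have h := hA.sq_dotProduct_mulVec_lt_s11 (linearIndependent_pair_mulVec hx)
  rw [pow_one]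
  rwa [(isHermitian_iff_isSymm.mp hA.1).mulVec_dotProduct, mulVec_mulVec, mulVec_mulVec,
    ← pow_two, ← pow_succ'] at h

end Matrix

theorem beta_hat_eq_f1_beta_tilde_general
    {n : ℕ} (A : Matrix (Fin n) (Fin n) ℝ) (g : Fin n → ℝ)
    (hA : A.PosDef)
    (hpar : ¬ ∃ t : ℝ, A.mulVec g = t • g)
    (c : ℕ → ℝ) (hc : ∀ j, c j = g ⬝ᵥ (A ^ j).mulVec g)
    (φ₃ φ₄ φ₅ : ℝ)
    (h3 : φ₃ = c 0 * c 3 - c 1 * c 2)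
    (h4 : φ₄ = c 1 * c 3 - c 2 ^ 2)
    (h5 : φ₅ = c 0 * c 2 - c 1 ^ 2)
    (βt βh : ℝ)
    (hβt : βt = (φ₃ - Real.sqrt (φ₃ ^ 2 - 4 * φ₄ * φ₅)) / (2 * φ₄))
    (hβh : βh = (φ₃ + Real.sqrt (φ₃ ^ 2 - 4 * φ₄ * φ₅)) / (2 * φ₄)) :
    (φ₄ * βt ^ 2 - φ₃ * βt + φ₅ = 0) ∧
    (φ₄ * βh ^ 2 - φ₃ * βh + φ₅ = 0) ∧
    βh = (g ⬝ᵥ ((1 - βt • A) * (1 - βt • A)).mulVec g) /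
          (g ⬝ᵥ ((1 - βt • A) * A * (1 - βt • A)).mulVec g) := by
  have hind := linearIndependent_pair_mulVec hpar
  have hc₁ : 0 < c 1 := by
    rw [hc, pow_one]
    simpa using hA.dotProduct_mulVec_pos (hind.ne_zero 0)
  have hφ₄ : 0 < φ₄ := by
    have hcs := hA.sq_dotProduct_pow_two_mulVec_lt hpar
    rw [← hc, ← hc, ← hc] at hcs
    linarith
  have hdisc : Real.sqrt (φ₃ ^ 2 - 4 * φ₄ * φ₅) ^ 2 = φ₃ ^ 2 - 4 * φ₄ * φ₅ :=
    Real.sq_sqrt (h3 ▸ h4 ▸ h5 ▸ hankel_discrim_nonneg hc₁.ne' (h4 ▸ hφ₄.le))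
  have hroot_t : φ₄ * βt ^ 2 - φ₃ * βt + φ₅ = 0 := by
    rw [hβt, sub_eq_add_neg]
    exact quadratic_root_eq_zero hφ₄.ne' (by rwa [neg_sq])
  refine ⟨hroot_t, hβh ▸ quadratic_root_eq_zero hφ₄.ne' hdisc, ?_⟩
  have hden_pos := hA.dotProduct_mul_mul_pos
    (isSymm_one.sub ((isHermitian_iff_isSymm.mp hA.1).smul βt))
    (one_sub_smul_mulVec_ne_zero hind βt)
  have hnum := dotProduct_one_sub_smul_mul_pow_mul_one_sub_smul hc βt 0
  have hden := dotProduct_one_sub_smul_mul_pow_mul_one_sub_smul hc βt 1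
  rw [pow_zero, mul_one] at hnum
  rw [pow_one] at hden
  rw [eq_div_iff hden_pos.ne', hnum, hden]
  subst h3 h4 h5
  refine vieta_partner_mul_denominator_eq_numerator hφ₄.ne' ?_ hroot_t
  rw [hβt, hβh]
  field_simp
  ring

theorem beta_hat_eq_f1_beta_tilde
    {n : ℕ} (A : Matrix (Fin n) (Fin n) ℝ) (g : Fin n → ℝ)
    (hA : A.PosDef) (hg : g ≠ 0)
    (hpar : ¬ ∃ t : ℝ, A.mulVec g = t • g)
    (c : ℕ → ℝ) (hc : ∀ j, c j = g ⬝ᵥ (A ^ j).mulVec g)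
    (φ₃ φ₄ φ₅ : ℝ)
    (h3 : φ₃ = c 0 * c 3 - c 1 * c 2)
    (h4 : φ₄ = c 1 * c 3 - c 2 ^ 2)
    (h5 : φ₅ = c 0 * c 2 - c 1 ^ 2)
    (βt βh : ℝ)
    (hβt : βt = (φ₃ - Real.sqrt (φ₃ ^ 2 - 4 * φ₄ * φ₅)) / (2 * φ₄))
    (hβh : βh = (φ₃ + Real.sqrt (φ₃ ^ 2 - 4 * φ₄ * φ₅)) / (2 * φ₄)) :
    (φ₄ * βt ^ 2 - φ₃ * βt + φ₅ = 0) ∧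
    (φ₄ * βh ^ 2 - φ₃ * βh + φ₅ = 0) ∧
    βh = (g ⬝ᵥ ((1 - βt • A) * (1 - βt • A)).mulVec g) /
          (g ⬝ᵥ ((1 - βt • A) * A * (1 - βt • A)).mulVec g) :=
  beta_hat_eq_f1_beta_tilde_general A g hA hpar c hc φ₃ φ₄ φ₅ h3 h4 h5 βt βh hβt hβh
end

section
/- Let A be symmetric positive definite with eigenvalues in [λ₁, λ_n], and g ≠ 0 not parallel to Ag. Both roots of φ₄β² − φ₃β + φ₅ = 0 (with φ₃ = c₀c₃ − c₁c₂, φ₄ = c₁c₃ − c₂², φ₅ = c₀c₂ − c₁², c_j = gᵀA^j g) lie in the interval [1/λ_n, 1/λ₁]. -/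
/-!
Let `K` be the `2 × n` matrix with rows `g` and `Ag`. For symmetric `A` the Gram matrices
`K Kᵀ` and `K A Kᵀ` are the Hankel matrices of the moments `c₀, …, c₃`, and
`det (K Kᵀ - β K A Kᵀ) = φ₄ β² - φ₃ β + φ₅`. So a root `β` yields a nonzero `x` with
`K (1 - β A) Kᵀ x = 0`; pairing with `x` gives `w ⬝ᵥ w = β (w ⬝ᵥ A w)` for `w = Kᵀ x`, which is
nonzero since `g` and `Ag` are independent. Hence `β = (w ⬝ᵥ w) / (w ⬝ᵥ A w)`, which the spectral
bounds on `A` place in `[1/λₙ, 1/λ₁]`.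
-/

open Matrix

section Krylov

variable {κ : Type*} [Fintype κ] [DecidableEq κ]

def krylovMatrix (A : Matrix κ κ ℝ) (g : κ → ℝ) (m : ℕ) : Matrix (Fin m) κ ℝ :=
  Matrix.of fun i => (A ^ (i : ℕ)) *ᵥ g

def krylovMoment (A : Matrix κ κ ℝ) (g : κ → ℝ) (j : ℕ) : ℝ :=
  g ⬝ᵥ (A ^ j) *ᵥ g

lemma pow_mulVec_dotProduct_pow_mulVec {A : Matrix κ κ ℝ} (hA : Aᵀ = A) (g : κ → ℝ) (i j : ℕ) :
    (A ^ i) *ᵥ g ⬝ᵥ (A ^ j) *ᵥ g = krylovMoment A g (i + j) := by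
  rw [dotProduct_mulVec, ← mulVec_transpose, transpose_pow, hA, mulVec_mulVec, ← pow_add,
    dotProduct_comm, add_comm, krylovMoment]

lemma krylovMatrix_mul_transpose_apply {A : Matrix κ κ ℝ} (hA : Aᵀ = A) (g : κ → ℝ) {m : ℕ}
    (i j : Fin m) :
    (krylovMatrix A g m * (krylovMatrix A g m)ᵀ) i j = krylovMoment A g (i + j) :=
  pow_mulVec_dotProduct_pow_mulVec hA g i j

lemma krylovMatrix_mul_mul_transpose_apply {A : Matrix κ κ ℝ} (hA : Aᵀ = A) (g : κ → ℝ) {m : ℕ}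
    (i j : Fin m) :
    (krylovMatrix A g m * A * (krylovMatrix A g m)ᵀ) i j = krylovMoment A g (i + j + 1) := by
  rw [Matrix.mul_assoc, add_assoc, ← pow_mulVec_dotProduct_pow_mulVec hA, pow_succ',
    ← mulVec_mulVec]
  rfl

lemma det_krylovMatrix_two_pencil {A : Matrix κ κ ℝ} (hA : Aᵀ = A) (g : κ → ℝ) (μ : ℝ) :
    (krylovMatrix A g 2 * (krylovMatrix A g 2)ᵀ
        - μ • (krylovMatrix A g 2 * A * (krylovMatrix A g 2)ᵀ)).det
      = (krylovMoment A g 1 * krylovMoment A g 3 - krylovMoment A g 2 ^ 2) * μ ^ 2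
        - (krylovMoment A g 0 * krylovMoment A g 3 - krylovMoment A g 1 * krylovMoment A g 2) * μ
        + (krylovMoment A g 0 * krylovMoment A g 2 - krylovMoment A g 1 ^ 2) := by
  simp only [det_fin_two, Matrix.sub_apply, Matrix.smul_apply, smul_eq_mul,
    krylovMatrix_mul_transpose_apply hA, krylovMatrix_mul_mul_transpose_apply hA,
    Fin.val_zero, Fin.val_one]
  ring

lemma vecMul_krylovMatrix_two (A : Matrix κ κ ℝ) (g : κ → ℝ) (x : Fin 2 → ℝ) :
    x ᵥ* krylovMatrix A g 2 = x 0 • g + x 1 • A *ᵥ g := by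
  ext k
  simp [krylovMatrix, vecMul, dotProduct, Fin.sum_univ_two, mul_comm]

lemma eq_zero_of_vecMul_krylovMatrix_two_eq_zero {A : Matrix κ κ ℝ} {g : κ → ℝ}
    (hg : g ≠ 0) (hpar : ¬ ∃ t : ℝ, A *ᵥ g = t • g) (x : Fin 2 → ℝ)
    (hx : x ᵥ* krylovMatrix A g 2 = 0) : x = 0 := by
  rw [vecMul_krylovMatrix_two] at hx
  have hx1 : x 1 = 0 := by
    by_contra hx1
    refine hpar ⟨-(x 0 / x 1), ?_⟩
    have h := congrArg ((x 1)⁻¹ • ·) hx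
    simp only [smul_add, smul_smul, inv_mul_cancel₀ hx1, one_smul, smul_zero] at h
    rw [neg_smul, eq_neg_iff_add_eq_zero, add_comm, div_eq_inv_mul]
    exact h
  have hx0 : x 0 = 0 := by
    simpa [hx1, hg] using hx
  ext i; fin_cases i <;> simp [hx0, hx1]

lemma exists_dotProduct_self_eq_mul_of_det_eq_zero {ι : Type*} [Fintype ι] [DecidableEq ι]
    {K : Matrix ι κ ℝ} (hK : ∀ x, x ᵥ* K = 0 → x = 0) (A : Matrix κ κ ℝ) {μ : ℝ}
    (hdet : (K * Kᵀ - μ • (K * A * Kᵀ)).det = 0) :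
    ∃ w ≠ 0, w ⬝ᵥ w = μ * (w ⬝ᵥ A *ᵥ w) := by
  obtain ⟨x, hx0, hx⟩ := exists_mulVec_eq_zero_iff.mpr hdet
  refine ⟨x ᵥ* K, fun h => hx0 (hK x h), ?_⟩
  have hpencil : K * Kᵀ - μ • (K * A * Kᵀ) = K * (1 - μ • A) * Kᵀ := by
    rw [Matrix.mul_sub, Matrix.sub_mul, Matrix.mul_one, Matrix.mul_smul, Matrix.smul_mul]
  have hquad : x ⬝ᵥ (K * (1 - μ • A) * Kᵀ) *ᵥ x = 0 := by
    rw [← hpencil, hx, dotProduct_zero]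
  rw [← mulVec_mulVec, ← mulVec_mulVec, dotProduct_mulVec, mulVec_transpose, sub_mulVec,
    one_mulVec, smul_mulVec, dotProduct_sub, dotProduct_smul, smul_eq_mul, sub_eq_zero] at hquad
  exact hquad

end Krylov

lemma one_div_le_and_le_one_div_of_mul_eq {s r μ lam1 lamn : ℝ} (hs : 0 < s) (hlam1 : 0 < lam1)
    (hlo : lam1 * s ≤ r) (hhi : r ≤ lamn * s) (hμ : s = μ * r) :
    1 / lamn ≤ μ ∧ μ ≤ 1 / lam1 := by
  have hr : 0 < r := by nlinarith
  have hlamn : 0 < lamn := by nlinarith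
  constructor
  · rw [div_le_iff₀ hlamn]; nlinarith
  · rw [le_div_iff₀ hlam1]; nlinarith

theorem beta_roots_bounds
    {n : ℕ} (A : Matrix (Fin n) (Fin n) ℝ) (g : Fin n → ℝ)
    (hA : A.PosDef) (hg : g ≠ 0)
    (hpar : ¬ ∃ t : ℝ, A.mulVec g = t • g)
    (lam1 lamn : ℝ) (hlam1 : 0 < lam1)
    (hbound : ∀ v : Fin n → ℝ,
      lam1 * (v ⬝ᵥ v) ≤ v ⬝ᵥ A.mulVec v ∧ v ⬝ᵥ A.mulVec v ≤ lamn * (v ⬝ᵥ v))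
    (c : ℕ → ℝ) (hc : ∀ j, c j = g ⬝ᵥ (A ^ j).mulVec g)
    (φ₃ φ₄ φ₅ : ℝ)
    (h3 : φ₃ = c 0 * c 3 - c 1 * c 2)
    (h4 : φ₄ = c 1 * c 3 - c 2 ^ 2)
    (h5 : φ₅ = c 0 * c 2 - c 1 ^ 2) :
    ∀ β : ℝ, φ₄ * β ^ 2 - φ₃ * β + φ₅ = 0 →
      1 / lamn ≤ β ∧ β ≤ 1 / lam1 := by
  intro β hβ
  obtain rfl : c = krylovMoment A g := funext hc
  have hsymm : Aᵀ = A := hA.isHermitian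
  have hdet := det_krylovMatrix_two_pencil hsymm g β
  rw [← h3, ← h4, ← h5, hβ] at hdet
  obtain ⟨w, hw, hβw⟩ := exists_dotProduct_self_eq_mul_of_det_eq_zero
    (eq_zero_of_vecMul_krylovMatrix_two_eq_zero hg hpar) A hdet
  exact one_div_le_and_le_one_div_of_mul_eq (by simpa using dotProduct_star_self_pos_iff.mpr hw)
    hlam1 (hbound w).1 (hbound w).2 hβw
end
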